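/- The function φ̃(μ, σ) := σ·p(μ/σ) + μ·P(μ/σ) is monotonically increasing in σ for each fixed μ, i.e., if 0 < σ₁ ≤ σ₂ then φ̃(μ, σ₁) ≤ φ̃(μ, σ₂). -/

import Mathlib

/-!
Since `stdPdf' x = -x * stdPdf x`, the two chain-rule terms coming from the argument `μ / σ`
cancel and `∂φ̃/∂σ (μ, σ) = stdPdf (μ / σ) > 0`.
-/

open MeasureTheory ProbabilityTheory Real

noncomputable def stdPdf (x : ℝ) : ℝ := (Real.sqrt (2 * Real.pi))⁻¹ * Real.exp (-x ^ 2 / 2)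

noncomputable def stdCdf (x : ℝ) : ℝ := ∫ t in Set.Iic x, stdPdf t

noncomputable def phiTilde (μ σ : ℝ) : ℝ := σ * stdPdf (μ / σ) + μ * stdCdf (μ / σ)

theorem hasDerivAt_integral_Iic {E : Type*} [NormedAddCommGroup E] [NormedSpace ℝ E]
    [CompleteSpace E] {f : ℝ → E} (hf : Integrable f) (hf_cont : Continuous f) (x : ℝ) :
    HasDerivAt (fun y => ∫ t in Set.Iic y, f t) (f x) x := by
  have split : (fun y => ∫ t in Set.Iic y, f t) =
      fun y => (∫ t in (0 : ℝ)..y, f t) + ∫ t in Set.Iic 0, f t := by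
    ext y
    rw [← intervalIntegral.integral_Iic_sub_Iic hf.integrableOn hf.integrableOn, sub_add_cancel]
  rw [split]
  exact (intervalIntegral.integral_hasDerivAt_right hf.intervalIntegrable
    (hf_cont.stronglyMeasurableAtFilter _ _) hf_cont.continuousAt).add_const _

theorem stdPdf_eq_gaussianPDFReal : stdPdf = gaussianPDFReal 0 1 := by
  ext x
  simp [stdPdf, gaussianPDFReal]

theorem stdPdf_pos (x : ℝ) : 0 < stdPdf x :=
  stdPdf_eq_gaussianPDFReal ▸ gaussianPDFReal_pos 0 1 x one_ne_zero

theorem hasDerivAt_stdPdf (x : ℝ) : HasDerivAt stdPdf (-x * stdPdf x) x := by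
  have hexp : HasDerivAt (fun y : ℝ => -y ^ 2 / 2) (-x) x :=
    ((hasDerivAt_pow 2 x).neg.div_const 2).congr_deriv (by ring)
  exact (hexp.exp.const_mul _).congr_deriv (by rw [stdPdf]; ring)

theorem continuous_stdPdf : Continuous stdPdf :=
  continuous_iff_continuousAt.2 fun x => (hasDerivAt_stdPdf x).continuousAt

theorem hasDerivAt_stdCdf (x : ℝ) : HasDerivAt stdCdf (stdPdf x) x :=
  hasDerivAt_integral_Iic (stdPdf_eq_gaussianPDFReal ▸ integrable_gaussianPDFReal 0 1)
    continuous_stdPdf x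

theorem hasDerivAt_phiTilde (μ : ℝ) {σ : ℝ} (hσ : σ ≠ 0) :
    HasDerivAt (phiTilde μ) (stdPdf (μ / σ)) σ := by
  have hquot : HasDerivAt (fun s => μ / s) (-μ / σ ^ 2) σ :=
    ((hasDerivAt_inv hσ).const_mul μ).congr_deriv (by ring)
  refine (((hasDerivAt_id σ).mul ((hasDerivAt_stdPdf _).comp σ hquot)).add
    (((hasDerivAt_stdCdf _).comp σ hquot).const_mul μ)).congr_deriv ?_
  simp only [Function.comp_apply, id]
  field_simp
  ring

theorem strictMonoOn_phiTilde (μ : ℝ) : StrictMonoOn (phiTilde μ) (Set.Ioi 0) :=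
  strictMonoOn_of_hasDerivWithinAt_pos (convex_Ioi 0)
    (fun _ hσ => (hasDerivAt_phiTilde μ (ne_of_gt hσ)).continuousAt.continuousWithinAt)
    (fun _ hσ => (hasDerivAt_phiTilde μ (ne_of_gt (interior_subset hσ))).hasDerivWithinAt)
    (fun _ _ => stdPdf_pos _)

theorem phiTilde_mono_in_sigma (μ σ₁ σ₂ : ℝ) (h1 : 0 < σ₁) (h12 : σ₁ ≤ σ₂) :
    phiTilde μ σ₁ ≤ phiTilde μ σ₂ :=
  (strictMonoOn_phiTilde μ).monotoneOn h1 (h1.trans_le h12) h12
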